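/- arXiv:1607.02753 — 2 statements merged into one kernel-verified Lean document; each statement's English description precedes it below -/
import Mathlib

section
/- Let n ≥ 1. Let f, g : ℝⁿ → [0,∞) be convex functions that are C² on a neighborhood of 0 with f(0) = 0 = g(0); for x ∈ ℝⁿ let σ_x(y) = f(y) + g(x − y). Let μ be C¹ on a neighborhood U of 0 with μ(0) = 0 and such that μ(x) is the unique global minimizer of σ_x for each x ∈ U, and let h = f □ g. If Hess f|_{x=0} is positive definite, then there is a neighborhood V of 0 such that Id − Dμ(x) is invertible for all x ∈ V, and for every x ∈ V the following are equivalent: (1) Hess h|_x is positive definite; (2) Hess g|_{x−μ(x)} is positive definite; (3) Dμ(x) is invertible. -/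
open Set Filter Topology

noncomputable section

/-- The infimal convolution `(f □ g)(x) = ⨅ y, f y + g (x - y)`. -/
def infConv {E : Type*} [NormedAddCommGroup E] (f g : E → ℝ) (x : E) : ℝ :=
  ⨅ y : E, (f y + g (x - y))

/-!
Near `0` the minimiser turns `h = f □ g` into `f ∘ μ + g ∘ (id - μ)`, and the first-order
condition `Df (μ x) = Dg (x - μ x)` shows `Dh x = Df (μ x) = Dg (x - μ x)`. Differentiating both
expressions once more gives, with `A = Hess f|_{μ x}`, `B = Hess g|_{x - μ x}`, `M = Dμ x`,
`Hess h|_x = A ∘ M = B ∘ (id - M)`.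
Positive definiteness of `A` persists near `0` because it is an open condition, and `B` is
positive semidefinite by convexity of `g`. Splitting `v = M v + (v - M v)` gives
`Hess h|_x (v, v) = A (M v, M v) + B (v - M v, v - M v)`, from which the equivalences are
linear algebra.
-/

section PosDefForm

variable {E : Type*} [NormedAddCommGroup E] [NormedSpace ℝ E]

def IsPosDefForm (B : E →L[ℝ] E →L[ℝ] ℝ) : Prop :=
  ∀ v, v ≠ 0 → 0 < B v v

lemma IsPosDefForm.nonneg {A : E →L[ℝ] E →L[ℝ] ℝ} (hA : IsPosDefForm A) (v : E) : 0 ≤ A v v := by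
  rcases eq_or_ne v 0 with rfl | hv
  · simp
  · exact (hA v hv).le

lemma ContinuousLinearMap.apply_eq_zero_of_apply_self_eq_zero {B : E →L[ℝ] E →L[ℝ] ℝ}
    (hB : ∀ v, 0 ≤ B v v) (hBs : ∀ v w, B v w = B w v) {v : E} (hv : B v v = 0) : B v = 0 := by
  ext w
  have hdiscrim : discrim (B w w) (2 * B v w) 0 ≤ 0 := discrim_le_zero fun t => by
    have := hB (v + t • w)
    simp only [map_add, map_smul, add_apply, smul_apply, smul_eq_mul, hv, hBs w v] at this
    linarith
  rw [discrim] at hdiscrim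
  simpa using (show B v w = 0 by nlinarith [sq_nonneg (B v w)])

theorem isOpen_setOf_isPosDefForm [FiniteDimensional ℝ E] :
    IsOpen {A : E →L[ℝ] E →L[ℝ] ℝ | IsPosDefForm A} := by
  refine isOpen_iff_eventually.2 fun A₀ hA₀ => ?_
  have hcont : Continuous fun p : (E →L[ℝ] E →L[ℝ] ℝ) × E => p.1 p.2 p.2 := by fun_prop
  have hsphere : ∀ᶠ A in 𝓝 A₀, ∀ u ∈ Metric.sphere (0 : E) 1, 0 < A u u :=
    (isCompact_sphere 0 1).eventually_forall_of_forall_eventually fun u hu =>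
      (isOpen_lt continuous_const hcont).mem_nhds
        (hA₀ u (ne_zero_of_mem_unit_sphere ⟨u, hu⟩))
  filter_upwards [hsphere] with A hA v hv
  have hv' : 0 < ‖v‖ := norm_pos_iff.2 hv
  have hu := hA (‖v‖⁻¹ • v) (by simp [norm_smul, hv'.ne'])
  simp only [map_smul, smul_apply, smul_eq_mul] at hu
  exact pos_of_mul_pos_right (pos_of_mul_pos_right hu (by positivity)) (by positivity)

end PosDefForm

section HessianIdentity

variable {E : Type*} [NormedAddCommGroup E] [NormedSpace ℝ E]
  {A B : E →L[ℝ] E →L[ℝ] ℝ} {M : E →L[ℝ] E}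

lemma injective_of_isPosDefForm_comp (hAM : IsPosDefForm (A.comp M)) : Function.Injective M :=
  (injective_iff_map_eq_zero M).2 fun v hv => by
    by_contra hv0
    simpa [hv] using hAM v hv0

lemma injective_id_sub_of_comp_eq (hA : IsPosDefForm A) (hAB : A.comp M = B.comp (.id ℝ E - M)) :
    Function.Injective (ContinuousLinearMap.id ℝ E - M) :=
  (injective_iff_map_eq_zero _).2 fun v hv => by
    have hMv : M v = v := (sub_eq_zero.1 hv).symm
    have hAv : A v = 0 := by simpa [hMv, hv] using congr($hAB v)
    by_contra hv0
    simpa [hAv] using hA v hv0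

lemma isPosDefForm_of_injective_of_comp_eq (hA : IsPosDefForm A)
    (hAB : A.comp M = B.comp (.id ℝ E - M)) (hB : ∀ v, 0 ≤ B v v) (hBs : ∀ v w, B v w = B w v)
    (hM : Function.Injective M) : IsPosDefForm B := by
  intro v hv
  refine (hB v).lt_of_ne fun hBv => hv (hM ?_)
  -- `B v = 0` gives `A (M v) = -B (M v)`, and positivity of both forms forces `M v = 0`.
  have hBv0 := ContinuousLinearMap.apply_eq_zero_of_apply_self_eq_zero hB hBs hBv.symm
  have hAMv : A (M v) (M v) = -B (M v) (M v) := by simpa [hBv0] using congr($hAB v (M v))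
  have hMv : A (M v) (M v) = 0 := le_antisymm (by linarith [hB (M v)]) (hA.nonneg _)
  by_contra hne
  simpa [hMv] using hA (M v) (by simpa using hne)

lemma isPosDefForm_comp_of_isPosDefForm (hA : IsPosDefForm A)
    (hAB : A.comp M = B.comp (.id ℝ E - M)) (hB : IsPosDefForm B) : IsPosDefForm (A.comp M) := by
  intro v hv
  have hAu : A (M v) (v - M v) = B (v - M v) (v - M v) := by simpa using congr($hAB v (v - M v))
  have hsplit : A (M v) v = A (M v) (M v) + B (v - M v) (v - M v) := by
    rw [← hAu, map_sub]
    ring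
  rw [ContinuousLinearMap.comp_apply, hsplit]
  rcases eq_or_ne (M v) 0 with hMv | hMv
  · simpa [hMv] using hB v hv
  · exact add_pos_of_pos_of_nonneg (hA _ hMv) (hB.nonneg _)

variable [FiniteDimensional ℝ E]

lemma ContinuousLinearMap.bijective_of_injective {T : E →L[ℝ] E} (hT : Function.Injective T) :
    Function.Bijective T :=
  ⟨hT, LinearMap.injective_iff_surjective (f := (T : E →ₗ[ℝ] E)).1 hT⟩

theorem tfae_isPosDefForm_comp_of_comp_eq (hA : IsPosDefForm A)
    (hAB : A.comp M = B.comp (.id ℝ E - M)) (hB : ∀ v, 0 ≤ B v v) (hBs : ∀ v w, B v w = B w v) :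
    [IsPosDefForm (A.comp M), IsPosDefForm B, Function.Bijective M].TFAE := by
  tfae_have 1 → 3 := fun h =>
    ContinuousLinearMap.bijective_of_injective (injective_of_isPosDefForm_comp h)
  tfae_have 3 → 2 := fun h => isPosDefForm_of_injective_of_comp_eq hA hAB hB hBs h.1
  tfae_have 2 → 1 := isPosDefForm_comp_of_isPosDefForm hA hAB
  tfae_finish

end HessianIdentity

section InfConv

variable {E : Type*} [NormedAddCommGroup E] {f g : E → ℝ}

lemma infConv_eq_of_forall_le {x m : E} (h : ∀ y, f m + g (x - m) ≤ f y + g (x - y)) :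
    infConv f g x = f m + g (x - m) :=
  le_antisymm (ciInf_le ⟨_, forall_mem_range.2 h⟩ m) (le_ciInf h)

variable [NormedSpace ℝ E] {μ : E → E}

lemma eq_of_hasFDerivAt_of_forall_le {x m : E} {f' g' : E →L[ℝ] ℝ} (hf : HasFDerivAt f f' m)
    (hg : HasFDerivAt g g' (x - m)) (h : ∀ y, f m + g (x - m) ≤ f y + g (x - y)) : f' = g' := by
  have hmin : IsLocalMin (fun y => f y + g (x - y)) m := Eventually.of_forall h
  have h0 := hmin.hasFDerivAt_eq_zero (hf.add (hg.comp m ((hasFDerivAt_id m).const_sub x)))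
  ext w
  simpa [← sub_eq_add_neg, sub_eq_zero] using congr($h0 w)

lemma hasFDerivAt_comp_add_comp_sub {x : E} {L : E →L[ℝ] ℝ} (hμ : DifferentiableAt ℝ μ x)
    (hf : HasFDerivAt f L (μ x)) (hg : HasFDerivAt g L (x - μ x)) :
    HasFDerivAt (fun x => f (μ x) + g (x - μ x)) L x := by
  refine ((hf.comp x hμ.hasFDerivAt).add
    (hg.comp x ((hasFDerivAt_id x).sub hμ.hasFDerivAt))).congr_fderiv ?_
  ext w
  simp

lemma hasFDerivAt_infConv {x : E}
    (hmin : ∀ᶠ x' in 𝓝 x, ∀ y, f (μ x') + g (x' - μ x') ≤ f y + g (x' - y))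
    (hμ : DifferentiableAt ℝ μ x) (hf : DifferentiableAt ℝ f (μ x))
    (hg : DifferentiableAt ℝ g (x - μ x)) :
    HasFDerivAt (infConv f g) (fderiv ℝ f (μ x)) x ∧ fderiv ℝ f (μ x) = fderiv ℝ g (x - μ x) := by
  have hfg := eq_of_hasFDerivAt_of_forall_le hf.hasFDerivAt hg.hasFDerivAt hmin.self_of_nhds
  refine ⟨?_, hfg⟩
  refine (hasFDerivAt_comp_add_comp_sub hμ hf.hasFDerivAt
    (hfg ▸ hg.hasFDerivAt)).congr_of_eventuallyEq ?_
  filter_upwards [hmin] with x' hx' using infConv_eq_of_forall_le hx'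

end InfConv

section SecondDerivative

variable {E : Type*} [NormedAddCommGroup E] [NormedSpace ℝ E]

lemma ContDiffAt.hasFDerivAt_fderiv {F : Type*} [NormedAddCommGroup F] [NormedSpace ℝ F]
    {φ : E → F} {p : E} (h : ContDiffAt ℝ 2 φ p) :
    HasFDerivAt (fderiv ℝ φ) (fderiv ℝ (fderiv ℝ φ) p) p :=
  ((h.fderiv_right (m := 1) (by norm_num)).differentiableAt one_ne_zero).hasFDerivAt

theorem ConvexOn.fderiv_fderiv_apply_self_nonneg {g : E → ℝ} {p : E} (hg : ConvexOn ℝ univ g)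
    (hp : ContDiffAt ℝ 2 g p) (v : E) : 0 ≤ fderiv ℝ (fderiv ℝ g) p v v := by
  set c := AffineMap.lineMap (k := ℝ) p (p + v)
  have hc : ∀ t : ℝ, c t = p + t • v := fun t => by
    simp [c, AffineMap.lineMap_apply, add_comm]
  have hc' : ∀ t : ℝ, HasDerivAt c v t := fun t => by
    rw [show ⇑c = fun t => p + t • v from funext hc]
    simpa using ((hasDerivAt_id t).smul_const v).const_add p
  obtain ⟨ε, hε, hdiff⟩ := Metric.eventually_nhds_iff_ball.1 <|
    (hc' 0).continuousAt.tendsto.eventually (by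
      simpa [hc] using (hp.eventually (by simp)).mono fun y hy => hy.differentiableAt two_ne_zero)
  have hφ : ∀ t ∈ Metric.ball (0 : ℝ) ε, HasDerivAt (g ∘ c) (fderiv ℝ g (c t) v) t :=
    fun t ht => (hdiff t ht).hasFDerivAt.comp_hasDerivAt t (hc' t)
  have hmono : MonotoneOn (fun t => fderiv ℝ g (c t) v) (Metric.ball 0 ε) := by
    intro s hs t ht hst
    dsimp only
    rw [← (hφ s hs).deriv, ← (hφ t ht).deriv]
    exact (hg.comp_affineMap c).subset (subset_univ _) (convex_ball 0 ε) |>.monotoneOn_deriv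
      (fun t ht => (hφ t ht).differentiableAt) hs ht hst
  have hψ : HasDerivAt (fun t => fderiv ℝ g (c t) v) (fderiv ℝ (fderiv ℝ g) p v v) 0 := by
    have h := hp.hasFDerivAt_fderiv.comp_hasDerivAt_of_eq (x := 0) (hc' 0) (by simp [hc])
    exact (ContinuousLinearMap.apply ℝ ℝ v).hasFDerivAt.comp_hasDerivAt 0 h
  have hacc : AccPt (0 : ℝ) (𝓟 (Metric.ball 0 ε)) := by
    simpa using (PerfectSpace.univ_preperfect 0 (mem_univ _)).nhds_inter (Metric.ball_mem_nhds 0 hε)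
  exact hψ.hasDerivWithinAt.nonneg_of_monotoneOn hacc hmono

end SecondDerivative

section InfConvHessian

variable {E : Type*} [NormedAddCommGroup E] [NormedSpace ℝ E] {f g : E → ℝ} {μ : E → E}

theorem hasFDerivAt_fderiv_infConv {x : E}
    (hmin : ∀ᶠ x' in 𝓝 x, ∀ y, f (μ x') + g (x' - μ x') ≤ f y + g (x' - y))
    (hμ : ∀ᶠ x' in 𝓝 x, DifferentiableAt ℝ μ x')
    (hf : ∀ᶠ x' in 𝓝 x, ContDiffAt ℝ 2 f (μ x'))
    (hg : ∀ᶠ x' in 𝓝 x, ContDiffAt ℝ 2 g (x' - μ x')) :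
    HasFDerivAt (fderiv ℝ (infConv f g))
        ((fderiv ℝ (fderiv ℝ f) (μ x)).comp (fderiv ℝ μ x)) x ∧
      (fderiv ℝ (fderiv ℝ f) (μ x)).comp (fderiv ℝ μ x) =
        (fderiv ℝ (fderiv ℝ g) (x - μ x)).comp (.id ℝ E - fderiv ℝ μ x) := by
  have hD : ∀ᶠ x' in 𝓝 x, fderiv ℝ (infConv f g) x' = fderiv ℝ f (μ x') ∧
      fderiv ℝ f (μ x') = fderiv ℝ g (x' - μ x') := by
    filter_upwards [hmin.eventually_nhds, hμ, hf, hg] with x' hmin' hμ' hf' hg'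
    obtain ⟨hd, hfg⟩ := hasFDerivAt_infConv hmin' hμ' (hf'.differentiableAt two_ne_zero)
      (hg'.differentiableAt two_ne_zero)
    exact ⟨hd.fderiv, hfg⟩
  have hμx := hμ.self_of_nhds.hasFDerivAt
  have hF := (hf.self_of_nhds.hasFDerivAt_fderiv.comp x hμx).congr_of_eventuallyEq
    (hD.mono fun _ h => h.1)
  have hG := (hg.self_of_nhds.hasFDerivAt_fderiv.comp x ((hasFDerivAt_id x).sub hμx))
    |>.congr_of_eventuallyEq (hD.mono fun _ h => h.1.trans h.2)
  exact ⟨hF, hF.unique hG⟩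

variable [FiniteDimensional ℝ E]

lemma ContDiffAt.eventually_isPosDefForm_fderiv_fderiv {p : E} (hf : ContDiffAt ℝ 2 f p)
    (hpos : IsPosDefForm (fderiv ℝ (fderiv ℝ f) p)) :
    ∀ᶠ y in 𝓝 p, IsPosDefForm (fderiv ℝ (fderiv ℝ f) y) :=
  ((hf.fderiv_right (m := 1) (by norm_num)).continuousAt_fderiv one_ne_zero).eventually_mem
    (isOpen_setOf_isPosDefForm.mem_nhds hpos)

theorem isPosDefForm_fderiv_fderiv_infConv_tfae {x : E} (hgconv : ConvexOn ℝ univ g)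
    (hmin : ∀ᶠ x' in 𝓝 x, ∀ y, f (μ x') + g (x' - μ x') ≤ f y + g (x' - y))
    (hμ : ∀ᶠ x' in 𝓝 x, DifferentiableAt ℝ μ x')
    (hf : ∀ᶠ x' in 𝓝 x, ContDiffAt ℝ 2 f (μ x'))
    (hg : ∀ᶠ x' in 𝓝 x, ContDiffAt ℝ 2 g (x' - μ x'))
    (hpos : IsPosDefForm (fderiv ℝ (fderiv ℝ f) (μ x))) :
    Function.Bijective (ContinuousLinearMap.id ℝ E - fderiv ℝ μ x) ∧
      [IsPosDefForm (fderiv ℝ (fderiv ℝ (infConv f g)) x),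
        IsPosDefForm (fderiv ℝ (fderiv ℝ g) (x - μ x)),
        Function.Bijective (fderiv ℝ μ x)].TFAE := by
  obtain ⟨hH, hAB⟩ := hasFDerivAt_fderiv_infConv hmin hμ hf hg
  rw [hH.fderiv]
  exact ⟨ContinuousLinearMap.bijective_of_injective (injective_id_sub_of_comp_eq hpos hAB),
    tfae_isPosDefForm_comp_of_comp_eq hpos hAB
      (hgconv.fderiv_fderiv_apply_self_nonneg hg.self_of_nhds)
      (hg.self_of_nhds.isSymmSndFDerivAt (by simp))⟩

end InfConvHessian

lemma iteratedFDeriv_two_pos_iff_isPosDefForm {E : Type*} [NormedAddCommGroup E]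
    [NormedSpace ℝ E] {φ : E → ℝ} {x : E} :
    (∀ v : E, v ≠ 0 → 0 < iteratedFDeriv ℝ 2 φ x ![v, v]) ↔
      IsPosDefForm (fderiv ℝ (fderiv ℝ φ) x) := by
  simp [iteratedFDeriv_two_apply, IsPosDefForm]

theorem stmt4_general (n : ℕ)
    (f g : EuclideanSpace ℝ (Fin n) → ℝ)
    (hgconv : ConvexOn ℝ Set.univ g)
    (hfC2 : ∃ V ∈ 𝓝 (0 : EuclideanSpace ℝ (Fin n)), ContDiffOn ℝ 2 f V)
    (hgC2 : ∃ V ∈ 𝓝 (0 : EuclideanSpace ℝ (Fin n)), ContDiffOn ℝ 2 g V)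
    (U : Set (EuclideanSpace ℝ (Fin n))) (hU : U ∈ 𝓝 (0 : EuclideanSpace ℝ (Fin n)))
    (μ : EuclideanSpace ℝ (Fin n) → EuclideanSpace ℝ (Fin n))
    (hμC1 : ContDiffOn ℝ 1 μ U) (hμ0 : μ 0 = 0)
    (hμmin : ∀ x ∈ U, ∀ y : EuclideanSpace ℝ (Fin n), y ≠ μ x →
      f (μ x) + g (x - μ x) < f y + g (x - y))
    (hfpos : ∀ v : EuclideanSpace ℝ (Fin n), v ≠ 0 →
      0 < iteratedFDeriv ℝ 2 f 0 ![v, v]) :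
    ∃ V ∈ 𝓝 (0 : EuclideanSpace ℝ (Fin n)),
      (∀ x ∈ V, Function.Bijective
        (⇑(ContinuousLinearMap.id ℝ (EuclideanSpace ℝ (Fin n)) - fderiv ℝ μ x))) ∧
      ∀ x ∈ V,
        ((∀ v : EuclideanSpace ℝ (Fin n), v ≠ 0 →
            0 < iteratedFDeriv ℝ 2 (infConv f g) x ![v, v]) ↔
          (∀ v : EuclideanSpace ℝ (Fin n), v ≠ 0 →
            0 < iteratedFDeriv ℝ 2 g (x - μ x) ![v, v])) ∧
        ((∀ v : EuclideanSpace ℝ (Fin n), v ≠ 0 →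
            0 < iteratedFDeriv ℝ 2 (infConv f g) x ![v, v]) ↔
          Function.Bijective (fderiv ℝ μ x)) := by
  obtain ⟨Vf, hVf, hfV⟩ := hfC2
  obtain ⟨Vg, hVg, hgV⟩ := hgC2
  have hμc : ContinuousAt μ 0 := (hμC1.contDiffAt hU).continuousAt
  have hμt : Tendsto μ (𝓝 0) (𝓝 0) := by simpa only [hμ0] using hμc.tendsto
  have hsubt : Tendsto (fun x => x - μ x) (𝓝 0) (𝓝 0) := by simpa using tendsto_id.sub hμt
  have hf := (eventually_mem_nhds_iff.2 hVf).mono fun y hy => hfV.contDiffAt hy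
  have hg := (eventually_mem_nhds_iff.2 hVg).mono fun y hy => hgV.contDiffAt hy
  have hmin : ∀ᶠ x in 𝓝 0, ∀ y, f (μ x) + g (x - μ x) ≤ f y + g (x - y) := by
    filter_upwards [hU] with x hx y
    rcases eq_or_ne y (μ x) with rfl | hy
    exacts [le_rfl, (hμmin x hx y hy).le]
  have hμd := (eventually_mem_nhds_iff.2 hU).mono fun x hx =>
    (hμC1.contDiffAt hx).differentiableAt one_ne_zero
  have hpos := hf.self_of_nhds.eventually_isPosDefForm_fderiv_fderiv
    (iteratedFDeriv_two_pos_iff_isPosDefForm.1 hfpos)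
  have key := (hmin.eventually_nhds.and (hμd.eventually_nhds.and
    ((hμt.eventually hf).eventually_nhds.and ((hsubt.eventually hg).eventually_nhds.and
      (hμt.eventually hpos))))).mono fun x ⟨hmin', hμd', hf', hg', hpos'⟩ =>
    isPosDefForm_fderiv_fderiv_infConv_tfae hgconv hmin' hμd' hf' hg' hpos'
  refine ⟨_, key, fun x hx => hx.1, fun x hx => ?_⟩
  simp only [iteratedFDeriv_two_pos_iff_isPosDefForm]
  exact ⟨hx.2.out 0 1, hx.2.out 0 2⟩

/-- Lemma 2.2 of the paper (first part). If `Hess f` at `0` is positive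
definite, then `Id - Dμ x` is invertible near `0` and `Hess h|_x > 0  ⇔
Hess g|_{x - μ x} > 0  ⇔  Dμ x invertible` for all `x` near `0`. -/
theorem stmt4 (n : ℕ) (hn : 1 ≤ n)
    (f g : EuclideanSpace ℝ (Fin n) → ℝ)
    (hfnn : ∀ x, 0 ≤ f x) (hgnn : ∀ x, 0 ≤ g x)
    (hfconv : ConvexOn ℝ Set.univ f) (hgconv : ConvexOn ℝ Set.univ g)
    (hfC2 : ∃ V ∈ 𝓝 (0 : EuclideanSpace ℝ (Fin n)), ContDiffOn ℝ 2 f V)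
    (hgC2 : ∃ V ∈ 𝓝 (0 : EuclideanSpace ℝ (Fin n)), ContDiffOn ℝ 2 g V)
    (hf0 : f 0 = 0) (hg0 : g 0 = 0)
    (U : Set (EuclideanSpace ℝ (Fin n))) (hU : U ∈ 𝓝 (0 : EuclideanSpace ℝ (Fin n)))
    (μ : EuclideanSpace ℝ (Fin n) → EuclideanSpace ℝ (Fin n))
    (hμC1 : ContDiffOn ℝ 1 μ U) (hμ0 : μ 0 = 0)
    (hμmin : ∀ x ∈ U, ∀ y : EuclideanSpace ℝ (Fin n), y ≠ μ x →
      f (μ x) + g (x - μ x) < f y + g (x - y))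
    (hfpos : ∀ v : EuclideanSpace ℝ (Fin n), v ≠ 0 →
      0 < iteratedFDeriv ℝ 2 f 0 ![v, v]) :
    ∃ V ∈ 𝓝 (0 : EuclideanSpace ℝ (Fin n)),
      (∀ x ∈ V, Function.Bijective
        (⇑(ContinuousLinearMap.id ℝ (EuclideanSpace ℝ (Fin n)) - fderiv ℝ μ x))) ∧
      ∀ x ∈ V,
        ((∀ v : EuclideanSpace ℝ (Fin n), v ≠ 0 →
            0 < iteratedFDeriv ℝ 2 (infConv f g) x ![v, v]) ↔
          (∀ v : EuclideanSpace ℝ (Fin n), v ≠ 0 →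
            0 < iteratedFDeriv ℝ 2 g (x - μ x) ![v, v])) ∧
        ((∀ v : EuclideanSpace ℝ (Fin n), v ≠ 0 →
            0 < iteratedFDeriv ℝ 2 (infConv f g) x ![v, v]) ↔
          Function.Bijective (fderiv ℝ μ x)) :=
  stmt4_general n f g hgconv hfC2 hgC2 U hU μ hμC1 hμ0 hμmin hfpos
end
end

section
/- Let J ⊂ ℝ be a compact interval, c an endpoint of J, and f ∈ C^∞(J) pliable at c, with pliable series f = Σ_{k ≥ k₀} c_k g_k. Then for every integer r ≥ 0 one has f^{(r)}(c) = 0, and f^{(r)} = Σ_{k ≥ k₀} c_k g_k^{(r)} is pliable at c. -/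
/-
Away from `c` the series is locally a finite sum, so it can be differentiated termwise.
At a point at distance `ε` from `c` at most `L` terms are nonzero, and each of them has
`2^{-kL} ≤ ε`, so `k → ∞` as `ε → 0`. Since `c_k` decays faster than any exponential while
`‖g_k‖_{C^r}` grows at most exponentially, these terms are uniformly small: `f^{(r)}(x) → 0`
as `x → c`, and `f^{(r)}(c) = 0` by continuity. The derived series inherits the remaining
conditions because `supp g_k^{(r)} ⊆ supp g_k` and
`‖g_k^{(r)}‖_{C^{r'}} ≤ ‖g_k‖_{C^{r'+r}}`.
-/

open Set Filter Topology

noncomputable section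

/-- The `C^r` norm `‖f‖_{C^r(J)} = ∑_{i=0}^{r} max_J |f^{(i)}|` of a function on a set
`J ⊆ ℝ` (derivatives taken within `J`). -/
def CrNorm (r : ℕ) (f : ℝ → ℝ) (J : Set ℝ) : ℝ :=
  ∑ i ∈ Finset.range (r + 1), ⨆ x : J, |iteratedDerivWithin i f J (x : ℝ)|

/-- The support of `g` relative to the interval `[a,b]`: the closure of the set of points
of `[a,b]` where `g` is nonzero. -/
def suppOn (a b : ℝ) (g : ℝ → ℝ) : Set ℝ :=
  closure {x | x ∈ Set.Icc a b ∧ g x ≠ 0}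

/-- The data `(k₀, cs, g)` is a series witnessing that `f` is pliable at the endpoint `c`
of the interval `[a,b]`:
* `f = Σ_{k ≥ k₀} cs k • g k` pointwise on `[a,b]`;
* the `cs k` are positive and super-exponentially converge to `0`;
* the `g k` are `C^∞` on `[a,b]`, their supports form a locally finite family of compact
  subsets of `[a,b] ∖ {c}`, and for every `r` the `C^r` norms of `g k` grow at most
  exponentially in `k`;
* there is `L > 0` such that whenever `0 < 2ε < b - a`, the set `J_ε` of indices `k ≥ k₀`
  whose support meets `{x ∈ [a,b] : ε ≤ |x - c| ≤ 2ε}` has at most `L` elements, and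
  `2^{-kL} ≤ ε` for every `k ∈ J_ε`. -/
structure IsPliableSeries (a b c : ℝ) (f : ℝ → ℝ) (k₀ : ℤ) (cs : ℤ → ℝ)
    (g : ℤ → ℝ → ℝ) : Prop where
  sum_eq : ∀ x ∈ Set.Icc a b,
    HasSum (fun k : {k : ℤ // k₀ ≤ k} => cs k.val * g k.val x) (f x)
  cs_pos : ∀ k : ℤ, k₀ ≤ k → 0 < cs k
  cs_superexp : ∀ γ : ℝ,
    Tendsto (fun k : ℤ => (2 : ℝ) ^ (γ * (k : ℝ)) * cs k) atTop (𝓝 0)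
  g_smooth : ∀ k : ℤ, k₀ ≤ k → ContDiffOn ℝ (⊤ : ℕ∞) (g k) (Set.Icc a b)
  supp_compact : ∀ k : ℤ, k₀ ≤ k → IsCompact (suppOn a b (g k))
  supp_subset : ∀ k : ℤ, k₀ ≤ k → suppOn a b (g k) ⊆ Set.Icc a b \ {c}
  supp_locFin : ∀ x ∈ Set.Icc a b \ {c}, ∃ U ∈ 𝓝 x,
    {k : ℤ | k₀ ≤ k ∧ (suppOn a b (g k) ∩ U).Nonempty}.Finite
  norm_growth : ∀ r : ℕ, ∃ γ M : ℝ, ∀ k : ℤ, k₀ ≤ k →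
    (2 : ℝ) ^ (γ * (k : ℝ)) * CrNorm r (g k) (Set.Icc a b) ≤ M
  index_bound : ∃ L : ℕ, 0 < L ∧ ∀ ε : ℝ, 0 < ε → 2 * ε < b - a →
    {k : ℤ | k₀ ≤ k ∧ (suppOn a b (g k) ∩
      {x ∈ Set.Icc a b | ε ≤ |x - c| ∧ |x - c| ≤ 2 * ε}).Nonempty}.Finite ∧
    {k : ℤ | k₀ ≤ k ∧ (suppOn a b (g k) ∩
      {x ∈ Set.Icc a b | ε ≤ |x - c| ∧ |x - c| ≤ 2 * ε}).Nonempty}.ncard ≤ L ∧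
    ∀ k : ℤ, k₀ ≤ k →
      (suppOn a b (g k) ∩ {x ∈ Set.Icc a b | ε ≤ |x - c| ∧ |x - c| ≤ 2 * ε}).Nonempty →
      (2 : ℝ) ^ (-(k : ℝ) * (L : ℝ)) ≤ ε

/-- `f` is pliable at the endpoint `c` of `[a,b]`. -/
def Pliable (a b c : ℝ) (f : ℝ → ℝ) : Prop :=
  ∃ (k₀ : ℤ) (cs : ℤ → ℝ) (g : ℤ → ℝ → ℝ), IsPliableSeries a b c f k₀ cs g

section

variable {𝕜 F : Type*} [NontriviallyNormedField 𝕜] [NormedAddCommGroup F] [NormedSpace 𝕜 F]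
  {f : 𝕜 → F} {s : Set 𝕜}

theorem iteratedDerivWithin_iteratedDerivWithin (i r : ℕ) :
    iteratedDerivWithin i (iteratedDerivWithin r f s) s = iteratedDerivWithin (i + r) f s := by
  have iterate (n : ℕ) (h : 𝕜 → F) :
      iteratedDerivWithin n h s = (fun g => derivWithin g s)^[n] h :=
    funext fun _ => iteratedDerivWithin_eq_iterate
  rw [iterate, iterate, iterate, Function.iterate_add_apply]

theorem ContDiffOn.iteratedDerivWithin {n m : WithTop ℕ∞} (hf : ContDiffOn 𝕜 n f s)
    (hs : UniqueDiffOn 𝕜 s) {r : ℕ} (hmr : m + r ≤ n) :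
    ContDiffOn 𝕜 m (iteratedDerivWithin r f s) s := by
  induction r generalizing m with
  | zero => simpa using hf.of_le (by simpa using hmr)
  | succ r ih =>
    rw [iteratedDerivWithin_succ]
    refine (ih ?_).derivWithin hs le_rfl
    rwa [Nat.cast_succ, add_comm (r : WithTop ℕ∞), ← add_assoc] at hmr

end

theorem abs_le_ncard_mul_of_hasSum {ι : Type*} {u : ι → ℝ} {s η : ℝ} (h : HasSum u s)
    {T : Set ι} (hT : T.Finite) (hu : ∀ i ∉ T, u i = 0) (hη : ∀ i ∈ T, |u i| ≤ η) :
    |s| ≤ T.ncard * η := by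
  have hsum : s = ∑ i ∈ hT.toFinset, u i :=
    h.unique (hasSum_sum_of_ne_finset_zero fun i hi => hu i (by simpa using hi))
  calc |s| ≤ ∑ i ∈ hT.toFinset, |u i| := hsum ▸ Finset.abs_sum_le_sum_abs _ _
    _ ≤ ∑ _i ∈ hT.toFinset, η := Finset.sum_le_sum fun i hi => hη i (by simpa using hi)
    _ = T.ncard * η := by rw [Finset.sum_const, nsmul_eq_mul, Set.ncard_eq_toFinset_card T hT]

section CrNorm

variable {f : ℝ → ℝ} {J : Set ℝ}

theorem crNorm_nonneg (r : ℕ) (f : ℝ → ℝ) (J : Set ℝ) : 0 ≤ CrNorm r f J :=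
  Finset.sum_nonneg fun _ _ => Real.iSup_nonneg fun _ => abs_nonneg _

theorem abs_iteratedDerivWithin_le_crNorm (hJ : IsCompact J) {i r : ℕ}
    (hcont : ContinuousOn (iteratedDerivWithin i f J) J) (hi : i ≤ r) {x : ℝ} (hx : x ∈ J) :
    |iteratedDerivWithin i f J x| ≤ CrNorm r f J := by
  have hbdd : BddAbove (range fun y : J => |iteratedDerivWithin i f J y|) := by
    simpa only [image_eq_range] using hJ.bddAbove_image hcont.abs
  calc |iteratedDerivWithin i f J x| ≤ ⨆ y : J, |iteratedDerivWithin i f J y| :=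
        le_ciSup hbdd ⟨x, hx⟩
    _ ≤ CrNorm r f J :=
        Finset.single_le_sum (f := fun j => ⨆ y : J, |iteratedDerivWithin j f J y|)
          (fun _ _ => Real.iSup_nonneg fun _ => abs_nonneg _) (Finset.mem_range.2 (by omega))

theorem crNorm_iteratedDerivWithin_le (r' r : ℕ) :
    CrNorm r' (iteratedDerivWithin r f J) J ≤ CrNorm (r' + r) f J := by
  simp only [CrNorm, iteratedDerivWithin_iteratedDerivWithin]
  rw [show r' + r + 1 = r + (r' + 1) by omega, Finset.sum_range_add _ r]
  simp only [add_comm _ r]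
  exact le_add_of_nonneg_left (Finset.sum_nonneg fun _ _ => Real.iSup_nonneg fun _ => abs_nonneg _)

end CrNorm

section suppOn

variable {a b x : ℝ} {g : ℝ → ℝ}

theorem eq_zero_of_notMem_suppOn (hx : x ∈ Icc a b) (hxg : x ∉ suppOn a b g) : g x = 0 :=
  not_not.1 fun h => hxg (subset_closure ⟨hx, h⟩)

theorem iteratedDerivWithin_eq_zero_of_notMem_suppOn (hx : x ∈ Icc a b)
    (hxg : x ∉ suppOn a b g) (r : ℕ) : iteratedDerivWithin r g (Icc a b) x = 0 := by
  have hg : g =ᶠ[𝓝[Icc a b] x] fun _ => 0 := by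
    filter_upwards [nhdsWithin_le_nhds (isClosed_closure.isOpen_compl.mem_nhds hxg),
      self_mem_nhdsWithin] with y hyg hy
    exact eq_zero_of_notMem_suppOn hy hyg
  rw [hg.iteratedDerivWithin_eq (eq_zero_of_notMem_suppOn hx hxg), iteratedDerivWithin_const]
  simp

theorem suppOn_iteratedDerivWithin_subset (r : ℕ) :
    suppOn a b (iteratedDerivWithin r g (Icc a b)) ⊆ suppOn a b g :=
  closure_minimal (fun _ ⟨hx, hne⟩ => by_contra fun hxg =>
    hne (iteratedDerivWithin_eq_zero_of_notMem_suppOn hx hxg r)) isClosed_closure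

end suppOn

namespace IsPliableSeries

variable {a b c : ℝ} {f : ℝ → ℝ} {k₀ : ℤ} {cs : ℤ → ℝ} {g : ℤ → ℝ → ℝ}

theorem tendsto_mul_crNorm (hf : IsPliableSeries a b c f k₀ cs g) (r : ℕ) :
    Tendsto (fun k => cs k * CrNorm r (g k) (Icc a b)) atTop (𝓝 0) := by
  obtain ⟨γ, M, hM⟩ := hf.norm_growth r
  have hlim := (hf.cs_superexp (-γ)).mul_const M
  rw [zero_mul] at hlim
  refine squeeze_zero' ?_ ?_ hlim
  · filter_upwards [eventually_ge_atTop k₀] with k hk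
    exact mul_nonneg (hf.cs_pos k hk).le (crNorm_nonneg _ _ _)
  · filter_upwards [eventually_ge_atTop k₀] with k hk
    have hscale : (2 : ℝ) ^ (-γ * k) * (2 : ℝ) ^ (γ * k) = 1 := by
      rw [← Real.rpow_add two_pos]
      simp
    calc cs k * CrNorm r (g k) (Icc a b)
        = (2 : ℝ) ^ (-γ * k) * cs k * ((2 : ℝ) ^ (γ * k) * CrNorm r (g k) (Icc a b)) := by
          linear_combination (-(cs k * CrNorm r (g k) (Icc a b))) * hscale
      _ ≤ (2 : ℝ) ^ (-γ * k) * cs k * M :=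
          mul_le_mul_of_nonneg_left (hM k hk) (by positivity [hf.cs_pos k hk])

theorem eq_sum_of_forall_mem (hf : IsPliableSeries a b c f k₀ cs g) {U : Set ℝ}
    {F : Finset {k : ℤ // k₀ ≤ k}}
    (hF : ∀ k : {k : ℤ // k₀ ≤ k}, (suppOn a b (g k) ∩ U).Nonempty → k ∈ F)
    {y : ℝ} (hy : y ∈ Icc a b) (hyU : y ∈ U) : f y = ∑ k ∈ F, cs k * g k y := by
  refine (hf.sum_eq y hy).unique (hasSum_sum_of_ne_finset_zero fun k hk => ?_)
  have hyg : y ∉ suppOn a b (g k) := fun hyg => hk (hF k ⟨y, hyg, hyU⟩)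
  rw [eq_zero_of_notMem_suppOn hy hyg, mul_zero]

theorem hasSum_iteratedDerivWithin (hf : IsPliableSeries a b c f k₀ cs g) (hab : a < b)
    {x : ℝ} (hx : x ∈ Icc a b) (hxc : x ≠ c) (r : ℕ) :
    HasSum (fun k : {k : ℤ // k₀ ≤ k} => cs k * iteratedDerivWithin r (g k) (Icc a b) x)
      (iteratedDerivWithin r f (Icc a b) x) := by
  obtain ⟨U, hU, hfin⟩ := hf.supp_locFin x ⟨hx, hxc⟩
  set F := (hfin.preimage Subtype.val_injective.injOn).toFinset
  have hF : ∀ k : {k : ℤ // k₀ ≤ k}, (suppOn a b (g k) ∩ U).Nonempty → k ∈ F :=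
    fun k hk => by simpa [F] using ⟨k.2, hk⟩
  have hfF : f =ᶠ[𝓝[Icc a b] x] fun y => ∑ k ∈ F, cs k * g k y := by
    filter_upwards [nhdsWithin_le_nhds hU, self_mem_nhdsWithin] with y hyU hy
    exact hf.eq_sum_of_forall_mem hF hy hyU
  have hsmooth : ∀ k ∈ F, ContDiffWithinAt ℝ r (fun y => cs k * g k y) (Icc a b) x :=
    fun k _ => contDiffOn_const.mul ((hf.g_smooth k k.2).of_le (WithTop.coe_le_coe.2 le_top)) x hx
  rw [hfF.iteratedDerivWithin_eq (hf.eq_sum_of_forall_mem hF hx (mem_of_mem_nhds hU)),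
    iteratedDerivWithin_fun_sum hx (uniqueDiffOn_Icc hab) hsmooth]
  simp only [iteratedDerivWithin_const_mul_field]
  refine hasSum_sum_of_ne_finset_zero fun k hk => ?_
  have hxg : x ∉ suppOn a b (g k) := fun hxg => hk (hF k ⟨x, hxg, mem_of_mem_nhds hU⟩)
  rw [iteratedDerivWithin_eq_zero_of_notMem_suppOn hx hxg, mul_zero]

theorem abs_iteratedDerivWithin_le (hf : IsPliableSeries a b c f k₀ cs g) (hab : a < b)
    {x : ℝ} (hx : x ∈ Icc a b) (hxc : x ≠ c) (r : ℕ) {J : Set ℤ} (hJ : J.Finite)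
    (hxJ : ∀ k, k₀ ≤ k → x ∈ suppOn a b (g k) → k ∈ J) {η : ℝ} (hη₀ : 0 ≤ η)
    (hη : ∀ k ∈ J, k₀ ≤ k → cs k * CrNorm r (g k) (Icc a b) ≤ η) :
    |iteratedDerivWithin r f (Icc a b) x| ≤ J.ncard * η := by
  have hT : (Subtype.val ⁻¹' J : Set {k : ℤ // k₀ ≤ k}).Finite :=
    hJ.preimage Subtype.val_injective.injOn
  refine (abs_le_ncard_mul_of_hasSum (η := η) (hf.hasSum_iteratedDerivWithin hab hx hxc r) hT
    (fun k hk => ?_) (fun k hk => ?_)).trans ?_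
  · have hxg : x ∉ suppOn a b (g k) := fun hxg => hk (hxJ k k.2 hxg)
    rw [iteratedDerivWithin_eq_zero_of_notMem_suppOn hx hxg, mul_zero]
  · have hcs := hf.cs_pos k k.2
    have hderiv : |iteratedDerivWithin r (g k) (Icc a b) x| ≤ CrNorm r (g k) (Icc a b) :=
      abs_iteratedDerivWithin_le_crNorm isCompact_Icc
        ((hf.g_smooth k k.2).continuousOn_iteratedDerivWithin (WithTop.coe_le_coe.2 le_top)
          (uniqueDiffOn_Icc hab)) le_rfl hx
    rw [abs_mul, abs_of_pos hcs]
    exact (mul_le_mul_of_nonneg_left hderiv hcs.le).trans (hη k hk k.2)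
  · gcongr
    exact ncard_le_ncard_of_injOn _ (fun _ hk => hk) Subtype.val_injective.injOn hJ

theorem tendsto_iteratedDerivWithin (hf : IsPliableSeries a b c f k₀ cs g) (hab : a < b)
    (r : ℕ) : Tendsto (iteratedDerivWithin r f (Icc a b)) (𝓝[Icc a b \ {c}] c) (𝓝 0) := by
  rw [Metric.tendsto_nhdsWithin_nhds]
  intro η hη
  obtain ⟨L, hL, hindex⟩ := hf.index_bound
  have hη' : 0 < η / (L + 1) := by positivity
  obtain ⟨K, hK⟩ := eventually_atTop.1 ((hf.tendsto_mul_crNorm r).eventually (gt_mem_nhds hη'))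
  refine ⟨min ((2 : ℝ) ^ (-(K : ℝ) * L)) ((b - a) / 2), by positivity, ?_⟩
  rintro x ⟨hx, hxc⟩ hxδ
  rw [Real.dist_eq, lt_min_iff] at hxδ
  rw [Real.dist_eq, sub_zero]
  have hε : 0 < |x - c| := abs_pos.2 (sub_ne_zero.2 hxc)
  obtain ⟨hJ, hJL, hJ_large⟩ := hindex |x - c| hε (by linarith [hxδ.2])
  -- `k ∈ J_ε` forces `2^{-kL} ≤ ε < 2^{-KL}`, hence `K < k`.
  have hJK : ∀ k, k₀ ≤ k → (suppOn a b (g k) ∩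
      {y ∈ Icc a b | |x - c| ≤ |y - c| ∧ |y - c| ≤ 2 * |x - c|}).Nonempty → K ≤ k := by
    intro k hk hne
    have hlt := (Real.rpow_lt_rpow_left_iff one_lt_two).1 ((hJ_large k hk hne).trans_lt hxδ.1)
    have hL' : (0 : ℝ) < L := by exact_mod_cast hL
    have hKk : (K : ℝ) < k := by nlinarith
    exact_mod_cast hKk.le
  calc |iteratedDerivWithin r f (Icc a b) x|
      ≤ _ * (η / (L + 1)) :=
        hf.abs_iteratedDerivWithin_le hab hx hxc r hJ
          (fun k hk hxg => ⟨hk, x, hxg, hx, le_rfl, by linarith⟩) hη'.le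
          (fun k ⟨hk, hne⟩ _ => (hK k (hJK k hk hne)).le)
    _ ≤ L * (η / (L + 1)) := by gcongr
    _ < η := by
        rw [mul_div_assoc', div_lt_iff₀ (by positivity)]
        linarith

theorem iteratedDerivWithin_eq_zero (hf : IsPliableSeries a b c f k₀ cs g) (hab : a < b)
    (hc : c ∈ Icc a b) {r : ℕ} (hfr : ContDiffOn ℝ r f (Icc a b)) :
    iteratedDerivWithin r f (Icc a b) c = 0 := by
  have : (𝓝[Icc a b \ {c}] c).NeBot :=
    accPt_principal_iff_nhdsWithin.1 (uniqueDiffOn_Icc hab c hc).accPt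
  have hcont := hfr.continuousOn_iteratedDerivWithin le_rfl (uniqueDiffOn_Icc hab) c hc
  exact tendsto_nhds_unique (hcont.mono sdiff_subset).tendsto
    (hf.tendsto_iteratedDerivWithin hab r)

end IsPliableSeries

theorem isPliableSeries_iteratedDerivWithin {a b c : ℝ} {f : ℝ → ℝ} {k₀ : ℤ} {cs : ℤ → ℝ}
    {g : ℤ → ℝ → ℝ} (hf : IsPliableSeries a b c f k₀ cs g) (hab : a < b) (hc : c ∈ Icc a b)
    {r : ℕ} (hfr : ContDiffOn ℝ r f (Icc a b)) :
    IsPliableSeries a b c (iteratedDerivWithin r f (Icc a b)) k₀ cs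
      (fun k => iteratedDerivWithin r (g k) (Icc a b)) := by
  have hsupp (k : ℤ) := suppOn_iteratedDerivWithin_subset (a := a) (b := b) (g := g k) r
  have hindex (S : Set ℝ) :
      {k | k₀ ≤ k ∧ (suppOn a b (iteratedDerivWithin r (g k) (Icc a b)) ∩ S).Nonempty} ⊆
        {k | k₀ ≤ k ∧ (suppOn a b (g k) ∩ S).Nonempty} :=
    fun k ⟨hk, hne⟩ => ⟨hk, hne.mono (inter_subset_inter_left S (hsupp k))⟩
  refine ⟨fun x hx => ?_, hf.cs_pos, hf.cs_superexp, fun k hk => ?_,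
    fun k hk => (hf.supp_compact k hk).of_isClosed_subset isClosed_closure (hsupp k),
    fun k hk => (hsupp k).trans (hf.supp_subset k hk), fun x hx => ?_, fun r' => ?_, ?_⟩
  · rcases eq_or_ne x c with rfl | hxc
    · rw [hf.iteratedDerivWithin_eq_zero hab hx hfr]
      convert hasSum_zero with k
      rw [iteratedDerivWithin_eq_zero_of_notMem_suppOn hx
        (fun h => (hf.supp_subset k k.2 h).2 rfl), mul_zero]
    · exact hf.hasSum_iteratedDerivWithin hab hx hxc r
  · exact (hf.g_smooth k hk).iteratedDerivWithin (uniqueDiffOn_Icc hab)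
      (by exact_mod_cast le_top)
  · obtain ⟨U, hU, hfin⟩ := hf.supp_locFin x hx
    exact ⟨U, hU, hfin.subset (hindex U)⟩
  · obtain ⟨γ, M, hM⟩ := hf.norm_growth (r' + r)
    exact ⟨γ, M, fun k hk => (mul_le_mul_of_nonneg_left (crNorm_iteratedDerivWithin_le r' r)
      (by positivity)).trans (hM k hk)⟩
  · obtain ⟨L, hL, hLs⟩ := hf.index_bound
    refine ⟨L, hL, fun ε hε hε2 => ?_⟩
    obtain ⟨hfin, hcard, hlarge⟩ := hLs ε hε hε2
    exact ⟨hfin.subset (hindex _), (ncard_le_ncard (hindex _) hfin).trans hcard,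
      fun k hk hne => hlarge k hk (hne.mono (inter_subset_inter_left _ (hsupp k)))⟩

/-- Lemma 4.1(b) of the paper. If `f = Σ_{k ≥ k₀} cs k • g k` is pliable at
the endpoint `c` of `J = [a,b]`, then every derivative of `f` vanishes at `c` and
`f^{(r)} = Σ_{k ≥ k₀} cs k • g k^{(r)}` is again a pliable series at `c`. -/
theorem stmt11 (a b c : ℝ) (hab : a < b) (hc : c = a ∨ c = b)
    (f : ℝ → ℝ) (hfsm : ContDiffOn ℝ (⊤ : ℕ∞) f (Set.Icc a b))
    (k₀ : ℤ) (cs : ℤ → ℝ) (g : ℤ → ℝ → ℝ)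
    (hf : IsPliableSeries a b c f k₀ cs g) :
    ∀ r : ℕ,
      iteratedDerivWithin r f (Set.Icc a b) c = 0 ∧
      IsPliableSeries a b c (iteratedDerivWithin r f (Set.Icc a b)) k₀ cs
        (fun k => iteratedDerivWithin r (g k) (Set.Icc a b)) := by
  have hcJ : c ∈ Icc a b := by rcases hc with rfl | rfl <;> simp [hab.le]
  intro r
  have hfr : ContDiffOn ℝ r f (Icc a b) := hfsm.of_le (WithTop.coe_le_coe.2 le_top)
  exact ⟨hf.iteratedDerivWithin_eq_zero hab hcJ hfr,
    isPliableSeries_iteratedDerivWithin hf hab hcJ hfr⟩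
end
end
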